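/- arXiv:2206.10812 — 2 statements merged into one kernel-verified Lean document; each statement's English description precedes it below -/
import Mathlib

section
/- For every x ∈ ℝ^q, the expectation of the self-normalized ratio converges to G(x): lim_{N→∞} E[ (∑_{i=1}^N (g(X_i)/f(X_i)) · 1_{R(x)}(X_i)) / (∑_{i=1}^N g(X_i)/f(X_i)) ] = ∫_{R(x)} g(z) dz. -/
open MeasureTheory ProbabilityTheory Filter Set

/-!
The weights `g(Xᵢ)/f(Xᵢ)` and `1_{R(x)}(Xᵢ) g(Xᵢ)/f(Xᵢ)` are i.i.d. with means `∫ g = 1`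
and `G(x)`, since `f · (g/f) = g` once `g` vanishes wherever `f` does. Dividing numerator and
denominator by `N`, the strong law makes the self-normalized ratio converge almost surely to
`G(x) / 1`, and as the ratio lies in `[0, 1]` dominated convergence passes to the expectations.
-/

section Transfer

variable {Ω α : Type*} [MeasurableSpace Ω] [MeasurableSpace α] {P : Measure Ω}
  {μ : Measure α} {Y : Ω → α} {f φ : α → ℝ}

lemma integrable_comp_iff_of_map_eq_withDensity (hY : AEMeasurable Y P) (hf : Measurable f)
    (hf0 : ∀ z, 0 ≤ f z) (hφ : Measurable φ)
    (hlaw : P.map Y = μ.withDensity fun z => ENNReal.ofReal (f z)) :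
    Integrable (fun ω => φ (Y ω)) P ↔ Integrable (fun z => f z * φ z) μ := by
  change Integrable (φ ∘ Y) P ↔ _
  rw [← integrable_map_measure hφ.aestronglyMeasurable hY, hlaw,
    integrable_withDensity_iff_integrable_smul' hf.ennreal_ofReal
      (ae_of_all _ fun _ => ENNReal.ofReal_lt_top)]
  simp only [ENNReal.toReal_ofReal (hf0 _), smul_eq_mul]

lemma integral_comp_of_map_eq_withDensity (hY : AEMeasurable Y P) (hf : Measurable f)
    (hf0 : ∀ z, 0 ≤ f z) (hφ : Measurable φ)
    (hlaw : P.map Y = μ.withDensity fun z => ENNReal.ofReal (f z)) :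
    ∫ ω, φ (Y ω) ∂P = ∫ z, f z * φ z ∂μ := by
  rw [← integral_map hY hφ.aestronglyMeasurable, hlaw,
    integral_withDensity_eq_integral_toReal_smul hf.ennreal_ofReal
      (ae_of_all _ fun _ => ENNReal.ofReal_lt_top)]
  simp only [ENNReal.toReal_ofReal (hf0 _), smul_eq_mul]

end Transfer

lemma tendsto_sum_div_sum_of_tendsto_average {a b : ℕ → ℝ} {A B : ℝ} (hB : B ≠ 0)
    (ha : Tendsto (fun N : ℕ => (∑ i ∈ Finset.range N, a i) / N) atTop (nhds A))
    (hb : Tendsto (fun N : ℕ => (∑ i ∈ Finset.range N, b i) / N) atTop (nhds B)) :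
    Tendsto (fun N : ℕ => (∑ i ∈ Finset.range N, a i) / ∑ i ∈ Finset.range N, b i)
      atTop (nhds (A / B)) := by
  refine (ha.div hb hB).congr' ?_
  filter_upwards [eventually_ge_atTop 1] with N hN
  exact div_div_div_cancel_right₀ (by positivity) _ _

lemma abs_sum_div_sum_le_one {ι : Type*} {s : Finset ι} {a b : ι → ℝ}
    (ha : ∀ i ∈ s, 0 ≤ a i) (hab : ∀ i ∈ s, a i ≤ b i) :
    |(∑ i ∈ s, a i) / ∑ i ∈ s, b i| ≤ 1 := by
  have hA : 0 ≤ ∑ i ∈ s, a i := Finset.sum_nonneg ha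
  have hAB : ∑ i ∈ s, a i ≤ ∑ i ∈ s, b i := Finset.sum_le_sum hab
  rw [abs_of_nonneg (div_nonneg hA (hA.trans hAB))]
  exact div_le_one_of_le₀ hAB (hA.trans hAB)

section SelfNormalized

variable {Ω E : Type*} [MeasurableSpace Ω] [MeasurableSpace E] {P : Measure Ω}
  {Y : ℕ → Ω → E} {φ ψ : E → ℝ}

lemma ae_tendsto_average_comp (hφ : Measurable φ) (hint : Integrable (fun ω => φ (Y 0 ω)) P)
    (hindep : Pairwise fun i j => IndepFun (Y i) (Y j) P)
    (hident : ∀ i, IdentDistrib (Y i) (Y 0) P P) :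
    ∀ᵐ ω ∂P, Tendsto (fun N : ℕ => (∑ i ∈ Finset.range N, φ (Y i ω)) / N)
      atTop (nhds (∫ ω, φ (Y 0 ω) ∂P)) :=
  strong_law_ae_real (fun i ω => φ (Y i ω)) hint
    (fun _ _ hij => (hindep hij).comp hφ hφ) (fun i => (hident i).comp hφ)

theorem tendsto_integral_sum_div_sum [IsProbabilityMeasure P]
    (hφ : Measurable φ) (hψ : Measurable ψ) (hφ0 : ∀ z, 0 ≤ φ z) (hφψ : ∀ z, φ z ≤ ψ z)
    (hψint : Integrable (fun ω => ψ (Y 0 ω)) P)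
    (hψmean : ∫ ω, ψ (Y 0 ω) ∂P ≠ 0)
    (hindep : Pairwise fun i j => IndepFun (Y i) (Y j) P)
    (hident : ∀ i, IdentDistrib (Y i) (Y 0) P P) :
    Tendsto (fun N : ℕ => ∫ ω,
        (∑ i ∈ Finset.range N, φ (Y i ω)) / (∑ i ∈ Finset.range N, ψ (Y i ω)) ∂P)
      atTop (nhds ((∫ ω, φ (Y 0 ω) ∂P) / ∫ ω, ψ (Y 0 ω) ∂P)) := by
  have hY : ∀ i, AEMeasurable (Y i) P := fun i => (hident i).aemeasurable_fst
  have hφint : Integrable (fun ω => φ (Y 0 ω)) P :=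
    hψint.mono' (hφ.comp_aemeasurable (hY 0)).aestronglyMeasurable
      (ae_of_all _ fun ω => by simpa [abs_of_nonneg (hφ0 _)] using hφψ (Y 0 ω))
  have hconst := integral_const (μ := P) ((∫ ω, φ (Y 0 ω) ∂P) / ∫ ω, ψ (Y 0 ω) ∂P)
  simp only [probReal_univ, one_smul] at hconst
  rw [← hconst]
  refine tendsto_integral_of_dominated_convergence (fun _ => 1) (fun N => ?_)
    (integrable_const 1) (fun N => ae_of_all _ fun ω => ?_) ?_
  · have hφY := fun i => hφ.comp_aemeasurable (hY i)
    have hψY := fun i => hψ.comp_aemeasurable (hY i)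
    exact AEMeasurable.aestronglyMeasurable (by fun_prop)
  · exact abs_sum_div_sum_le_one (fun i _ => hφ0 _) (fun i _ => hφψ _)
  · filter_upwards [ae_tendsto_average_comp hφ hφint hindep hident,
      ae_tendsto_average_comp hψ hψint hindep hident] with ω hφω hψω
    exact tendsto_sum_div_sum_of_tendsto_average hψmean hφω hψω

end SelfNormalized

theorem stmt_5_general
    {q : ℕ}
    {Ω : Type} [MeasurableSpace Ω] (P : Measure Ω) [IsProbabilityMeasure P]
    (X : ℕ → Ω → (Fin q → ℝ))
    (hXmeas : ∀ i, Measurable (X i))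
    (hindep : iIndepFun X P)
    (f g : (Fin q → ℝ) → ℝ)
    (hfm : Measurable f) (hgm : Measurable g)
    (hf0 : ∀ z, 0 ≤ f z) (hg0 : ∀ z, 0 ≤ g z)
    (hgint : ∫ z, g z = 1)
    (hlaw : ∀ i, Measure.map (X i) P
      = (volume : Measure (Fin q → ℝ)).withDensity fun z => ENNReal.ofReal (f z))
    (hsupp : ∀ z, 0 < g z → 0 < f z)
    (x : Fin q → ℝ) :
    Tendsto
      (fun N : ℕ => ∫ ω,
        (∑ i ∈ Finset.range N, Set.indicator (Set.Iic x) (fun z => g z / f z) (X i ω))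
          / (∑ i ∈ Finset.range N, g (X i ω) / f (X i ω)) ∂P)
      atTop (nhds (∫ z in Set.Iic x, g z)) := by
  have hmul : ∀ z, f z * (g z / f z) = g z := fun z =>
    mul_div_cancel_of_imp' fun hz => (hg0 z).antisymm' (not_lt.1 fun hgz => (hsupp z hgz).ne' hz)
  have hratio : Measurable fun z => g z / f z := hgm.div hfm
  have hX0 : AEMeasurable (X 0) P := (hXmeas 0).aemeasurable
  have hident : ∀ i, IdentDistrib (X i) (X 0) P P := fun i =>
    ⟨(hXmeas i).aemeasurable, hX0, by rw [hlaw i, hlaw 0]⟩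
  have hmean : ∫ ω, g (X 0 ω) / f (X 0 ω) ∂P = 1 := by
    rw [integral_comp_of_map_eq_withDensity hX0 hfm hf0 hratio (hlaw 0)]
    simpa only [hmul] using hgint
  have hmean_Iic :
      ∫ ω, (Iic x).indicator (fun z => g z / f z) (X 0 ω) ∂P = ∫ z in Iic x, g z := by
    rw [integral_comp_of_map_eq_withDensity hX0 hfm hf0 (hratio.indicator measurableSet_Iic)
      (hlaw 0), ← integral_indicator measurableSet_Iic]
    simp only [← indicator_mul_right, hmul]
  have hint : Integrable (fun ω => g (X 0 ω) / f (X 0 ω)) P := by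
    rw [integrable_comp_iff_of_map_eq_withDensity hX0 hfm hf0 hratio (hlaw 0)]
    simpa only [hmul] using Integrable.of_integral_ne_zero (hgint ▸ one_ne_zero)
  simpa only [hmean, hmean_Iic, div_one] using
    tendsto_integral_sum_div_sum (φ := (Iic x).indicator fun z => g z / f z)
      (hratio.indicator measurableSet_Iic) hratio
      (indicator_nonneg fun z _ => div_nonneg (hg0 z) (hf0 z))
      (indicator_le_self' fun z _ => div_nonneg (hg0 z) (hf0 z)) hint (hmean ▸ one_ne_zero)
      (fun _ _ hij => hindep.indepFun hij) hident

/-- For every `x ∈ ℝ^q`, the expectation of the self-normalized ratio converges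
to `G(x)`:
`lim_{N→∞} E[ (∑_{i=1}^N (g(X_i)/f(X_i)) · 1_{R(x)}(X_i)) / (∑_{i=1}^N g(X_i)/f(X_i)) ]
  = ∫_{R(x)} g(z) dz`. -/
theorem stmt_5
    {q : ℕ} (hq : 1 ≤ q)
    {Ω : Type} [MeasurableSpace Ω] (P : Measure Ω) [IsProbabilityMeasure P]
    (X : ℕ → Ω → (Fin q → ℝ))
    (hXmeas : ∀ i, Measurable (X i))
    (hindep : iIndepFun X P)
    (f g : (Fin q → ℝ) → ℝ)
    (hfm : Measurable f) (hgm : Measurable g)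
    (hf0 : ∀ z, 0 ≤ f z) (hg0 : ∀ z, 0 ≤ g z)
    (hfint : ∫ z, f z = 1) (hgint : ∫ z, g z = 1)
    (hlaw : ∀ i, Measure.map (X i) P
      = (volume : Measure (Fin q → ℝ)).withDensity fun z => ENNReal.ofReal (f z))
    (hsupp : ∀ z, 0 < g z → 0 < f z)
    (x : Fin q → ℝ) :
    Tendsto
      (fun N : ℕ => ∫ ω,
        (∑ i ∈ Finset.range N, Set.indicator (Set.Iic x) (fun z => g z / f z) (X i ω))
          / (∑ i ∈ Finset.range N, g (X i ω) / f (X i ω)) ∂P)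
      atTop (nhds (∫ z in Set.Iic x, g z)) :=
  stmt_5_general P X hXmeas hindep f g hfm hgm hf0 hg0 hgint hlaw hsupp x
end

section
/- Assume sup_{z ∈ S} g(z)/f(z) < ∞ and fix n ≥ 2 and x ∈ ℝ^q. For each N, let Z_N^1, …, Z_N^{n−1} be arbitrary S-valued random vectors on the same probability space. Then, almost surely as N → ∞, (∑_{j=1}^N (g(X_j)/f(X_j)) 1_{R(x)}(X_j) − ∑_{j=1}^{n−1} (g(Z_N^j)/f(Z_N^j)) 1_{R(x)}(Z_N^j)) / (∑_{j=1}^N g(X_j)/f(X_j) − ∑_{j=1}^{n−1} g(Z_N^j)/f(Z_N^j)) → ∫_{R(x)} g(z) dz = G(x). -/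
open MeasureTheory ProbabilityTheory Filter Set Topology

/-!
Put `w = g / f`, which is bounded. Since `f * w = g`, the strong law of large numbers gives
`N⁻¹ ∑_{j<N} w(X_j) → ∫ g = 1` and `N⁻¹ ∑_{j<N} (1_{R(x)} w)(X_j) → ∫_{R(x)} g` almost surely.
The `n - 1` correction terms are bounded by `(n - 1) sup w`, so they vanish after division by `N`,
and the ratio converges to the ratio of the limits.
-/

section StrongLaw

variable {Ω E : Type*} [MeasurableSpace Ω] [MeasurableSpace E] {P : Measure Ω}
  [IsProbabilityMeasure P]

theorem strong_law_ae_comp_of_abs_le {X : ℕ → Ω → E} (hX : ∀ i, Measurable (X i))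
    (hindep : iIndepFun X P) (hident : ∀ i, IdentDistrib (X i) (X 0) P P)
    {h : E → ℝ} (hh : Measurable h) {C : ℝ} (hC : ∀ z, |h z| ≤ C) :
    ∀ᵐ ω ∂P, Tendsto (fun N : ℕ => (∑ j ∈ Finset.range N, h (X j ω)) / N) atTop
      (𝓝 (∫ z, h z ∂P.map (X 0))) := by
  have hint : Integrable (fun ω => h (X 0 ω)) P :=
    (integrable_const C).mono' (hh.comp (hX 0)).aestronglyMeasurable
      (Eventually.of_forall fun ω => hC _)
  rw [integral_map (hX 0).aemeasurable hh.aestronglyMeasurable]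
  exact strong_law_ae_real (fun i ω => h (X i ω)) hint
    (fun i j hij => (hindep.comp (fun _ => h) (fun _ => hh)).indepFun hij)
    (fun i => (hident i).comp hh)

end StrongLaw

theorem integral_withDensity_ofReal {E : Type*} [MeasurableSpace E] {μ : Measure E}
    {f : E → ℝ} (hfm : Measurable f) (hf0 : ∀ z, 0 ≤ f z) (h : E → ℝ) :
    ∫ z, h z ∂μ.withDensity (fun z => ENNReal.ofReal (f z)) = ∫ z, f z * h z ∂μ := by
  rw [integral_withDensity_eq_integral_toReal_smul hfm.ennreal_ofReal
    (Eventually.of_forall fun _ => ENNReal.ofReal_lt_top)]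
  simp only [ENNReal.toReal_ofReal (hf0 _), smul_eq_mul]

theorem tendsto_div_natCast_of_abs_le {U : ℕ → ℝ} {C : ℝ} (hU : ∀ N, |U N| ≤ C) :
    Tendsto (fun N : ℕ => U N / N) atTop (𝓝 0) := by
  refine squeeze_zero_norm (fun N => ?_) (tendsto_const_div_atTop_nhds_zero_nat C)
  rw [norm_div, Real.norm_natCast, Real.norm_eq_abs]
  exact div_le_div_of_nonneg_right (hU N) N.cast_nonneg

theorem tendsto_sub_div_sub_of_abs_le {A B U V : ℕ → ℝ} {a b C : ℝ}
    (hA : Tendsto (fun N : ℕ => A N / N) atTop (𝓝 a))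
    (hB : Tendsto (fun N : ℕ => B N / N) atTop (𝓝 b)) (hb : b ≠ 0)
    (hU : ∀ N, |U N| ≤ C) (hV : ∀ N, |V N| ≤ C) :
    Tendsto (fun N => (A N - U N) / (B N - V N)) atTop (𝓝 (a / b)) := by
  have h := (hA.sub (tendsto_div_natCast_of_abs_le hU)).div
    (hB.sub (tendsto_div_natCast_of_abs_le hV)) (by simpa using hb)
  rw [sub_zero, sub_zero] at h
  refine h.congr' ?_
  filter_upwards [eventually_ne_atTop 0] with N hN
  rw [Pi.div_apply, ← sub_div, ← sub_div, div_div_div_cancel_right₀ (Nat.cast_ne_zero.mpr hN)]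

theorem abs_sum_range_le {m : ℕ} {u : ℕ → ℝ} {C : ℝ} (hu : ∀ j, |u j| ≤ C) :
    |∑ j ∈ Finset.range m, u j| ≤ m * C := by
  simpa using Finset.abs_sum_le_sum_abs u (Finset.range m) |>.trans
    (Finset.sum_le_sum fun j _ => hu j)

theorem stmt_7_general
    {q : ℕ}
    {Ω : Type} [MeasurableSpace Ω] (P : Measure Ω) [IsProbabilityMeasure P]
    (X : ℕ → Ω → (Fin q → ℝ))
    (hXmeas : ∀ i, Measurable (X i))
    (hindep : iIndepFun X P)
    (f g : (Fin q → ℝ) → ℝ)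
    (hfm : Measurable f) (hgm : Measurable g)
    (hf0 : ∀ z, 0 ≤ f z) (hg0 : ∀ z, 0 ≤ g z)
    (hgint : ∫ z, g z = 1)
    (hlaw : ∀ i, Measure.map (X i) P
      = (volume : Measure (Fin q → ℝ)).withDensity fun z => ENNReal.ofReal (f z))
    (hsupp : ∀ z, 0 < g z → 0 < f z)
    (C : ℝ) (hC : ∀ z, 0 < f z → g z / f z ≤ C)
    (n : ℕ)
    (Z : ℕ → ℕ → Ω → (Fin q → ℝ))
    (x : Fin q → ℝ) :
    ∀ᵐ ω ∂P, Tendsto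
      (fun N : ℕ =>
        ((∑ j ∈ Finset.range N, Set.indicator (Set.Iic x) (fun z => g z / f z) (X j ω))
          - ∑ j ∈ Finset.range (n - 1),
              Set.indicator (Set.Iic x) (fun z => g z / f z) (Z N j ω))
        / ((∑ j ∈ Finset.range N, g (X j ω) / f (X j ω))
          - ∑ j ∈ Finset.range (n - 1), g (Z N j ω) / f (Z N j ω)))
      atTop (nhds (∫ z in Set.Iic x, g z)) := by
  set w : (Fin q → ℝ) → ℝ := fun z => g z / f z
  have hwm : Measurable w := hgm.div hfm
  have hw_le : ∀ z, |w z| ≤ max C 0 := fun z => by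
    rw [abs_of_nonneg (div_nonneg (hg0 z) (hf0 z))]
    rcases (hf0 z).lt_or_eq with hz | hz
    · exact (hC z hz).trans (le_max_left _ _)
    · simp [← hz]
  have hfw : ∀ z, f z * w z = g z := fun z => by
    rcases (hf0 z).lt_or_eq with hz | hz
    · exact mul_div_cancel₀ _ hz.ne'
    · have : g z = 0 := ((hg0 z).lt_or_eq.resolve_left fun hg => (hsupp z hg).ne hz).symm
      simp [w, this, ← hz]
  have hwx_le : ∀ z, |(Iic x).indicator w z| ≤ max C 0 :=
    fun z => (norm_indicator_le_norm_self w z).trans (hw_le z)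
  have hident : ∀ i, IdentDistrib (X i) (X 0) P P :=
    fun i => ⟨(hXmeas i).aemeasurable, (hXmeas 0).aemeasurable, by rw [hlaw, hlaw]⟩
  have hnum := strong_law_ae_comp_of_abs_le hXmeas hindep hident
    (hwm.indicator measurableSet_Iic) hwx_le
  have hden := strong_law_ae_comp_of_abs_le hXmeas hindep hident hwm hw_le
  rw [hlaw, integral_withDensity_ofReal hfm hf0] at hnum hden
  simp only [← indicator_mul_right, hfw, integral_indicator measurableSet_Iic] at hnum
  simp only [hfw, hgint] at hden
  filter_upwards [hnum, hden] with ω hnum hden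
  simpa using tendsto_sub_div_sub_of_abs_le hnum hden one_ne_zero
    (fun N => abs_sum_range_le fun j => hwx_le (Z N j ω))
    (fun N => abs_sum_range_le fun j => hw_le (Z N j ω))

/-- Assume `sup_{z ∈ S} g(z)/f(z) ≤ C < ∞` and fix `n ≥ 2` and `x ∈ ℝ^q`.
For each `N`, let `Z_N^1, …, Z_N^{n−1}` be arbitrary `S`-valued random vectors on the same
probability space.  Then, almost surely as `N → ∞`,
`(∑_{j=1}^N (g(X_j)/f(X_j)) 1_{R(x)}(X_j) − ∑_{j=1}^{n−1} (g(Z_N^j)/f(Z_N^j)) 1_{R(x)}(Z_N^j))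
 / (∑_{j=1}^N g(X_j)/f(X_j) − ∑_{j=1}^{n−1} g(Z_N^j)/f(Z_N^j)) → ∫_{R(x)} g(z) dz = G(x)`. -/
theorem stmt_7
    {q : ℕ} (hq : 1 ≤ q)
    {Ω : Type} [MeasurableSpace Ω] (P : Measure Ω) [IsProbabilityMeasure P]
    (X : ℕ → Ω → (Fin q → ℝ))
    (hXmeas : ∀ i, Measurable (X i))
    (hindep : iIndepFun X P)
    (f g : (Fin q → ℝ) → ℝ)
    (hfm : Measurable f) (hgm : Measurable g)
    (hf0 : ∀ z, 0 ≤ f z) (hg0 : ∀ z, 0 ≤ g z)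
    (hfint : ∫ z, f z = 1) (hgint : ∫ z, g z = 1)
    (hlaw : ∀ i, Measure.map (X i) P
      = (volume : Measure (Fin q → ℝ)).withDensity fun z => ENNReal.ofReal (f z))
    (hsupp : ∀ z, 0 < g z → 0 < f z)
    (C : ℝ) (hC : ∀ z, 0 < f z → g z / f z ≤ C)
    (n : ℕ) (hn : 2 ≤ n)
    (Z : ℕ → ℕ → Ω → (Fin q → ℝ))
    (hZS : ∀ N j ω, j < n - 1 → 0 < f (Z N j ω))
    (x : Fin q → ℝ) :
    ∀ᵐ ω ∂P, Tendsto
      (fun N : ℕ =>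
        ((∑ j ∈ Finset.range N, Set.indicator (Set.Iic x) (fun z => g z / f z) (X j ω))
          - ∑ j ∈ Finset.range (n - 1),
              Set.indicator (Set.Iic x) (fun z => g z / f z) (Z N j ω))
        / ((∑ j ∈ Finset.range N, g (X j ω) / f (X j ω))
          - ∑ j ∈ Finset.range (n - 1), g (Z N j ω) / f (Z N j ω)))
      atTop (nhds (∫ z in Set.Iic x, g z)) :=
  stmt_7_general P X hXmeas hindep f g hfm hgm hf0 hg0 hgint hlaw hsupp C hC n Z x
end
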